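/- There exists a real solution (x, z) to the system {3x³z − x²z² − 4x²z − x² + xz² + 3xz − z² = 0, 3x⁶z³ + 6x⁶z² − 7x⁵z³ − 27x⁵z² − 2x⁵ + 9x⁴z³ + 53x⁴z² − 9x⁴z + 7x⁴ − 6x³z³ − 62x³z² + 25x³z − 11x³ + 2x²z³ + 44x²z² − 28x²z + 10x² − 18xz² + 15xz − 5x + 3z² − 3z + 1 = 0} with 0.51 < x < 0.52 and 0.61 < z < 0.62; moreover this solution does not satisfy 2x²z + x² − 2xz − x + z = 0. -/
import Mathlib

set_option maxHeartbeats 1000000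

/-- The reduced determinant condition det1′ (the cubic-in-x factor of det1). -/
def det1' (x z : ℝ) : ℝ :=
  3*x^3*z - x^2*z^2 - 4*x^2*z - x^2 + x*z^2 + 3*x*z - z^2

/-- The reduced determinant condition det5′ (the sextic-in-x factor of det5). -/
def det5' (x z : ℝ) : ℝ :=
  3*x^6*z^3 + 6*x^6*z^2 - 7*x^5*z^3 - 27*x^5*z^2 - 2*x^5 + 9*x^4*z^3 + 53*x^4*z^2
    - 9*x^4*z + 7*x^4 - 6*x^3*z^3 - 62*x^3*z^2 + 25*x^3*z - 11*x^3 + 2*x^2*z^3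
    + 44*x^2*z^2 - 28*x^2*z + 10*x^2 - 18*x*z^2 + 15*x*z - 5*x + 3*z^2 - 3*z + 1

private lemma key2 (A b z d2 d1 d0 : ℝ) (h : A*z + b = 0) :
    (d2*z^2 + d1*z + d0) * A^2 = d2*b^2 - d1*b*A + d0*A^2 := by
  linear_combination (d2*(A*z - b) + d1*A) * h

private lemma key3 (A b z d3 d2 d1 d0 : ℝ) (h : A*z + b = 0) :
    (d3*z^3 + d2*z^2 + d1*z + d0) * A^3
      = -(d3*b^3) + d2*b^2*A - d1*b*A^2 + d0*A^3 := by
  linear_combination (d3*((A*z)^2 - A*z*b + b^2) + d2*A*(A*z - b) + d1*A^2) * h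

private lemma zlin (A B : ℝ) (h : A ≠ 0) : A * (-B/A) + B = 0 := by
  field_simp
  ring

private lemma zbound (A B : ℝ) (hA : A < 0) (h1 : 0 < 100*B + 61*A)
    (h2 : 100*B + 62*A < 0) : 0.61 < -B/A ∧ -B/A < 0.62 := by
  have hA' : (0:ℝ) < -A := by linarith
  have he : -B/A = B/(-A) := by rw [neg_div, div_neg]
  constructor
  · rw [he, lt_div_iff₀ hA']; nlinarith
  · rw [he, div_lt_iff₀ hA']; nlinarith

private lemma nondeg (x z : ℝ) (hx1 : (0.51:ℝ) < x) (hx2 : x < 0.52)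
    (hz1 : (0.61:ℝ) < z) (hz2 : z < 0.62) :
    2*x^2*z + x^2 - 2*x*z - x + z ≠ 0 := by
  have hq : (0:ℝ) < 2*x^2 - 2*x + 1 := by nlinarith [sq_nonneg (2*x - 1)]
  have hpos : (0:ℝ) < 2*x^2*z + x^2 - 2*x*z - x + z := by
    nlinarith [mul_pos (sub_pos.mpr hz1) hq, sq_nonneg (2*x - 1)]
  exact ne_of_gt hpos

/-- there is a real solution of the reduced system with
0.51 < x < 0.52 and 0.61 < z < 0.62, and it does not satisfy the degenerate
common factor 2x²z + x² − 2xz − x + z = 0. -/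
theorem nondegenerate_solution_exists :
    ∃ x z : ℝ, det1' x z = 0 ∧ det5' x z = 0 ∧
      0.51 < x ∧ x < 0.52 ∧ 0.61 < z ∧ z < 0.62 ∧
      2*x^2*z + x^2 - 2*x*z - x + z ≠ 0 := by
  obtain ⟨x, hx, hmx⟩ : ∃ x ∈ Set.Ioo (0.518152102234:ℝ) 0.518152102236,
      (fun x : ℝ => (162*x^14 - 1053*x^13 + 3240*x^12 - 5373*x^11 + 3024*x^10 + 7533*x^9 - 23067*x^8 + 33858*x^7 - 32904*x^6 + 22698*x^5 - 11259*x^4 + 3951*x^3 - 936*x^2 + 135*x - 9 : ℝ)) x = 0 := by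
    have hc : ContinuousOn (fun x : ℝ => (162*x^14 - 1053*x^13 + 3240*x^12 - 5373*x^11 + 3024*x^10 + 7533*x^9 - 23067*x^8 + 33858*x^7 - 32904*x^6 + 22698*x^5 - 11259*x^4 + 3951*x^3 - 936*x^2 + 135*x - 9 : ℝ))
        (Set.Icc (0.518152102234:ℝ) 0.518152102236) := by fun_prop
    have hsub := intermediate_value_Ioo' (by norm_num : (0.518152102234:ℝ) ≤ 0.518152102236) hc
    have h0 : (0:ℝ) ∈ Set.Ioo ((fun x : ℝ => (162*x^14 - 1053*x^13 + 3240*x^12 - 5373*x^11 + 3024*x^10 + 7533*x^9 - 23067*x^8 + 33858*x^7 - 32904*x^6 + 22698*x^5 - 11259*x^4 + 3951*x^3 - 936*x^2 + 135*x - 9 : ℝ)) (0.518152102236:ℝ))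
        ((fun x : ℝ => (162*x^14 - 1053*x^13 + 3240*x^12 - 5373*x^11 + 3024*x^10 + 7533*x^9 - 23067*x^8 + 33858*x^7 - 32904*x^6 + 22698*x^5 - 11259*x^4 + 3951*x^3 - 936*x^2 + 135*x - 9 : ℝ)) (0.518152102234:ℝ)) := by
      constructor <;> norm_num
    obtain ⟨x, hx, hfx⟩ := hsub h0
    exact ⟨x, hx, hfx⟩
  simp only at hmx
  obtain ⟨hxl, hxu⟩ := hx
  have ht0 : (0:ℝ) ≤ x - 0.518152102234 := by linarith
  have htd : x - 0.518152102234 ≤ 2e-12 := by linarith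
  have hpow : ∀ i : ℕ, 0 ≤ (x - 0.518152102234)^i ∧ (x - 0.518152102234)^i ≤ (2e-12:ℝ)^i :=
    fun i => ⟨pow_nonneg ht0 i, pow_le_pow_left₀ ht0 htd i⟩
  obtain ⟨h1l,h1u⟩ := hpow 1
  obtain ⟨h2l,h2u⟩ := hpow 2
  obtain ⟨h3l,h3u⟩ := hpow 3
  obtain ⟨h4l,h4u⟩ := hpow 4
  obtain ⟨h5l,h5u⟩ := hpow 5
  obtain ⟨h6l,h6u⟩ := hpow 6
  obtain ⟨h7l,h7u⟩ := hpow 7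
  obtain ⟨h8l,h8u⟩ := hpow 8
  obtain ⟨h9l,h9u⟩ := hpow 9
  obtain ⟨h10l,h10u⟩ := hpow 10
  obtain ⟨h11l,h11u⟩ := hpow 11
  obtain ⟨h12l,h12u⟩ := hpow 12
  obtain ⟨h13l,h13u⟩ := hpow 13
  obtain ⟨h14l,h14u⟩ := hpow 14
  have ha : (27*x^12 - 117*x^11 + 225*x^10 - 162*x^9 - 234*x^8 + 837*x^7 - 1263*x^6 + 1238*x^5 - 855*x^4 + 420*x^3 - 142*x^2 + 30*x - 3 : ℝ) < 0 := by linarith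
  have hw61 : (0:ℝ) < 100*(-9*x^11 + 27*x^10 - 33*x^9 + 54*x^7 - 76*x^6 + 44*x^5 + 5*x^4 - 27*x^3 + 20*x^2 - 7*x + 1 : ℝ) + 61*(27*x^12 - 117*x^11 + 225*x^10 - 162*x^9 - 234*x^8 + 837*x^7 - 1263*x^6 + 1238*x^5 - 855*x^4 + 420*x^3 - 142*x^2 + 30*x - 3 : ℝ) := by linarith
  have hw62 : 100*(-9*x^11 + 27*x^10 - 33*x^9 + 54*x^7 - 76*x^6 + 44*x^5 + 5*x^4 - 27*x^3 + 20*x^2 - 7*x + 1 : ℝ) + 62*(27*x^12 - 117*x^11 + 225*x^10 - 162*x^9 - 234*x^8 + 837*x^7 - 1263*x^6 + 1238*x^5 - 855*x^4 + 420*x^3 - 142*x^2 + 30*x - 3 : ℝ) < 0 := by linarith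
  clear h1l h1u h2l h2u h3l h3u h4l h4u h5l h5u h6l h6u h7l h7u
  clear h8l h8u h9l h9u h10l h10u h11l h11u h12l h12u h13l h13u h14l h14u
  clear ht0 htd hpow
  have haz : (27*x^12 - 117*x^11 + 225*x^10 - 162*x^9 - 234*x^8 + 837*x^7 - 1263*x^6 + 1238*x^5 - 855*x^4 + 420*x^3 - 142*x^2 + 30*x - 3 : ℝ) ≠ 0 := ne_of_lt ha
  set z : ℝ := -(-9*x^11 + 27*x^10 - 33*x^9 + 54*x^7 - 76*x^6 + 44*x^5 + 5*x^4 - 27*x^3 + 20*x^2 - 7*x + 1 : ℝ) / (27*x^12 - 117*x^11 + 225*x^10 - 162*x^9 - 234*x^8 + 837*x^7 - 1263*x^6 + 1238*x^5 - 855*x^4 + 420*x^3 - 142*x^2 + 30*x - 3 : ℝ) with hzdef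
  have hz : (27*x^12 - 117*x^11 + 225*x^10 - 162*x^9 - 234*x^8 + 837*x^7 - 1263*x^6 + 1238*x^5 - 855*x^4 + 420*x^3 - 142*x^2 + 30*x - 3 : ℝ) * z + (-9*x^11 + 27*x^10 - 33*x^9 + 54*x^7 - 76*x^6 + 44*x^5 + 5*x^4 - 27*x^3 + 20*x^2 - 7*x + 1 : ℝ) = 0 := by
    rw [hzdef]; exact zlin _ _ haz
  obtain ⟨hz61, hz62⟩ := zbound _ _ ha hw61 hw62
  rw [← hzdef] at hz61 hz62
  refine ⟨x, z, ?_, ?_, by linarith, by linarith, hz61, hz62,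
    nondeg x z (by linarith) (by linarith) hz61 hz62⟩
  · have h2 : det1' x z * (27*x^12 - 117*x^11 + 225*x^10 - 162*x^9 - 234*x^8 + 837*x^7 - 1263*x^6 + 1238*x^5 - 855*x^4 + 420*x^3 - 142*x^2 + 30*x - 3 : ℝ)^2 = 0 := by
      have hk := key2 (27*x^12 - 117*x^11 + 225*x^10 - 162*x^9 - 234*x^8 + 837*x^7 - 1263*x^6 + 1238*x^5 - 855*x^4 + 420*x^3 - 142*x^2 + 30*x - 3 : ℝ) (-9*x^11 + 27*x^10 - 33*x^9 + 54*x^7 - 76*x^6 + 44*x^5 + 5*x^4 - 27*x^3 + 20*x^2 - 7*x + 1 : ℝ) z (-(x^2) + x - 1) (3*x^3 - 4*x^2 + 3*x) (-(x^2)) hz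
      have e1 : det1' x z = (-(x^2) + x - 1)*z^2 + (3*x^3 - 4*x^2 + 3*x)*z + (-(x^2)) := by
        unfold det1'; ring
      rw [e1, hk]
      linear_combination ((1:ℝ)/9 * (9*x^10 - 45*x^9 + 123*x^8 - 222*x^7 + 289*x^6 - 279*x^5 + 201*x^4 - 106*x^3 + 39*x^2 - 9*x + 1)) * hmx
    exact (mul_eq_zero.mp h2).resolve_right (pow_ne_zero 2 haz)
  · have h2 : det5' x z * (27*x^12 - 117*x^11 + 225*x^10 - 162*x^9 - 234*x^8 + 837*x^7 - 1263*x^6 + 1238*x^5 - 855*x^4 + 420*x^3 - 142*x^2 + 30*x - 3 : ℝ)^3 = 0 := by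
      have hk := key3 (27*x^12 - 117*x^11 + 225*x^10 - 162*x^9 - 234*x^8 + 837*x^7 - 1263*x^6 + 1238*x^5 - 855*x^4 + 420*x^3 - 142*x^2 + 30*x - 3 : ℝ) (-9*x^11 + 27*x^10 - 33*x^9 + 54*x^7 - 76*x^6 + 44*x^5 + 5*x^4 - 27*x^3 + 20*x^2 - 7*x + 1 : ℝ) z (3*x^6 - 7*x^5 + 9*x^4 - 6*x^3 + 2*x^2) (6*x^6 - 27*x^5 + 53*x^4 - 62*x^3 + 44*x^2 - 18*x + 3) (-9*x^4 + 25*x^3 - 28*x^2 + 15*x - 3) (-2*x^5 + 7*x^4 - 11*x^3 + 10*x^2 - 5*x + 1) hz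
      have e1 : det5' x z = (3*x^6 - 7*x^5 + 9*x^4 - 6*x^3 + 2*x^2)*z^3 + (6*x^6 - 27*x^5 + 53*x^4 - 62*x^3 + 44*x^2 - 18*x + 3)*z^2 + (-9*x^4 + 25*x^3 - 28*x^2 + 15*x - 3)*z + (-2*x^5 + 7*x^4 - 11*x^3 + 10*x^2 - 5*x + 1) := by
        unfold det5'; ring
      rw [e1, hk]
      linear_combination ((1:ℝ)/9 * (-2187*x^27 + 22599*x^26 - 112752*x^25 + 346923*x^24 - 682587*x^23 + 693441*x^22 + 522990*x^21 - 3768174*x^20 + 8470710*x^19 - 11750286*x^18 + 9301944*x^17 + 1692441*x^16 - 19655945*x^15 + 38481822*x^14 - 50851932*x^13 + 52586881*x^12 - 44682629*x^11 + 31838848*x^10 - 19180372*x^9 + 9778099*x^8 - 4199692*x^7 + 1505069*x^6 - 443026*x^5 + 104554*x^4 - 19056*x^3 + 2522*x^2 - 216*x + 9)) * hmx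
    exact (mul_eq_zero.mp h2).resolve_right (pow_ne_zero 3 haz)
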